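/- arXiv:2108.01524 — 2 statements merged into one kernel-verified Lean document; each statement's English description precedes it below -/
import Mathlib

section
/- The tropical complex hyperfield TC, with underlying set ℂ, standard complex multiplication, and hyperaddition z ⊞ w = {c ∈ ℂ : |c| ≤ |z|} if w = -z; {z} if |z| > |w|; {w} if |w| > |z|; and the shortest closed arc of radius |z| connecting z and w if |z| = |w| and z ≠ ±w, is a hyperfield. -/
open Set
open scoped Classical

/-- The axioms of a (Krasner) hyperfield on a carrier `H`, for a multivalued
addition `add`, multiplication `mul`, additive inverse `neg`, and constants. -/
structure IsHyperfield {H : Type*} (add : H → H → Set H) (mul : H → H → H)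
    (neg : H → H) (zero one : H) : Prop where
  add_nonempty : ∀ x y, (add x y).Nonempty
  hadd_comm : ∀ x y, add x y = add y x
  hadd_assoc : ∀ x y z, (⋃ w ∈ add x y, add w z) = ⋃ w ∈ add y z, add x w
  zero_hadd : ∀ x, add zero x = {x}
  hneg_add : ∀ x, zero ∈ add x (neg x)
  hneg_unique : ∀ x y, zero ∈ add x y → y = neg x
  reversible : ∀ x y z, x ∈ add y z → z ∈ add x (neg y)
  hmul_comm : ∀ x y, mul x y = mul y x
  hmul_assoc : ∀ x y z, mul (mul x y) z = mul x (mul y z)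
  one_hmul : ∀ x, mul one x = x
  zero_hmul : ∀ x, mul zero x = zero
  hdistrib : ∀ a x y, (mul a) '' (add x y) = add (mul a x) (mul a y)
  zero_ne_one : zero ≠ one
  exists_inv : ∀ x, x ≠ zero → ∃ y, mul x y = one

/-- Multivalued hypersum of a list of elements. -/
def hsum {H : Type*} (add : H → H → Set H) (zero : H) : List H → Set H
  | [] => {zero}
  | a :: l => ⋃ b ∈ hsum add zero l, add a b

/-- Powers with respect to a monoid multiplication. -/
def hpow {H : Type*} (mul : H → H → H) (one : H) (a : H) : ℕ → H
  | 0 => one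
  | n + 1 => mul a (hpow mul one a n)

/-- Multivalued evaluation of the univariate polynomial `⊞_{i=0}^n c_i ⊙ X^i` at `a`. -/
def evalPoly {H : Type*} (add : H → H → Set H) (mul : H → H → H) (zero one : H)
    (n : ℕ) (c : ℕ → H) (a : H) : Set H :=
  hsum add zero ((List.range (n + 1)).map fun i => mul (c i) (hpow mul one a i))

/-- Multivalued evaluation of a multivariate polynomial given by a list of
terms (coefficient, exponent vector) at a point `x`. -/
def evalMPoly {H : Type*} (add : H → H → Set H) (mul : H → H → H) (zero one : H)
    {n : ℕ} (terms : List (H × (Fin n → ℕ))) (x : Fin n → H) : Set H :=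
  hsum add zero (terms.map fun t =>
    mul t.1 ((List.ofFn fun j => hpow mul one (x j) (t.2 j)).foldr mul one))

/-- Hyperfield homomorphism axioms. -/
structure IsHyperfieldHom {H1 H2 : Type*}
    (add1 : H1 → H1 → Set H1) (mul1 : H1 → H1 → H1) (zero1 one1 : H1)
    (add2 : H2 → H2 → Set H2) (mul2 : H2 → H2 → H2) (zero2 one2 : H2)
    (f : H1 → H2) : Prop where
  map_zero : f zero1 = zero2
  map_one : f one1 = one2
  map_mul : ∀ x y, f (mul1 x y) = mul2 (f x) (f y)
  map_add : ∀ x y, f '' (add1 x y) ⊆ add2 (f x) (f y)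

/-- `f` is relatively algebraically closed: every root of the coefficientwise
push-forward of a univariate polynomial lifts through `f` to a root. -/
def IsRAC {H1 H2 : Type*}
    (add1 : H1 → H1 → Set H1) (mul1 : H1 → H1 → H1) (zero1 one1 : H1)
    (add2 : H2 → H2 → Set H2) (mul2 : H2 → H2 → H2) (zero2 one2 : H2)
    (f : H1 → H2) : Prop :=
  ∀ (n : ℕ) (c : ℕ → H1) (b : H2),
    zero2 ∈ evalPoly add2 mul2 zero2 one2 n (fun i => f (c i)) b →
    ∃ a : H1, f a = b ∧ zero1 ∈ evalPoly add1 mul1 zero1 one1 n c a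

/-- Tropical hyperaddition on `ℝ ∪ {-∞}`. -/
noncomputable def Tadd (x y : WithBot ℝ) : Set (WithBot ℝ) :=
  if x = y then {z | z ≤ x} else {max x y}

/-- Tropical multiplication: addition of extended reals. -/
noncomputable def Tmul (x y : WithBot ℝ) : WithBot ℝ := x + y

/-- Hyperaddition of the tropical complex hyperfield `TC` on `ℂ`. -/
noncomputable def TCadd (z w : ℂ) : Set ℂ :=
  if w = -z then {c | ‖c‖ ≤ ‖z‖}
  else if ‖w‖ < ‖z‖ then {z}
  else if ‖z‖ < ‖w‖ then {w}
  else {c | ∃ t : ℝ, 0 ≤ t ∧ t ≤ 1 ∧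
    c = ((‖z‖ / ‖(t : ℂ) * z + (1 - (t : ℂ)) * w‖ : ℝ) : ℂ) *
      ((t : ℂ) * z + (1 - (t : ℂ)) * w)}

/-- The homomorphism `η(z) = log |z|` from `TC` to the tropical hyperfield. -/
noncomputable def eta (z : ℂ) : WithBot ℝ :=
  if z = 0 then ⊥ else ((Real.log ‖z‖ : ℝ) : WithBot ℝ)

/-- Hyperaddition of the hyperfield of signs. -/
noncomputable def Sadd (x y : SignType) : Set SignType :=
  if x = 0 then {y} else if y = 0 then {x} else if x = y then {x} else Set.univ

/-- Hyperaddition of the Krasner hyperfield on `Bool` (`false = 0`, `true = 1`). -/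
def Kadd (x y : Bool) : Set Bool :=
  if x = false then {y} else if y = false then {x} else Set.univ

/-- `c ∈ (X ⊞ -a) ⊙ d` : the coefficients `c` arise from multiplying the linear
factor `X ⊞ (-a)` with the polynomial with coefficients `d`. -/
def LinFactor {H : Type*} (add : H → H → Set H) (mul : H → H → H) (zero : H)
    (neg : H → H) (a : H) (c d : ℕ → H) : Prop :=
  ∀ i, c i ∈ add (if i = 0 then zero else d (i - 1)) (mul (neg a) (d i))

/-- `MultGe … a n c k` : the multiplicity of `a` as a root of the degree-`n`
polynomial with coefficients `c` is at least `k` (recursive peeling of linear factors). -/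
def MultGe {H : Type*} (add : H → H → Set H) (mul : H → H → H) (zero one : H)
    (neg : H → H) (a : H) : ℕ → (ℕ → H) → ℕ → Prop
  | _, _, 0 => True
  | n, c, k + 1 => zero ∈ evalPoly add mul zero one n c a ∧
      ∃ d : ℕ → H, (∀ i, n ≤ i → d i = zero) ∧ LinFactor add mul zero neg a c d ∧
        MultGe add mul zero one neg a (n - 1) d k

/-- The multiplicity of `a` as a root. -/
noncomputable def hmult {H : Type*} (add : H → H → Set H) (mul : H → H → H)
    (zero one : H) (neg : H → H) (n : ℕ) (c : ℕ → H) (a : H) : ℕ :=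
  sSup {k | MultGe add mul zero one neg a n c k}

/-- The multiplicity bound: the sum of root multiplicities is at most the degree. -/
def MultBound {H : Type*} (add : H → H → Set H) (mul : H → H → H)
    (zero one : H) (neg : H → H) : Prop :=
  ∀ (n : ℕ) (c : ℕ → H), c n ≠ zero →
    ∀ S : Finset H, (S.sum fun a => hmult add mul zero one neg n c a) ≤ n

/-- The multiplicity equality: the sum of root multiplicities equals the degree. -/
def MultEq {H : Type*} (add : H → H → Set H) (mul : H → H → H)
    (zero one : H) (neg : H → H) : Prop :=
  MultBound add mul zero one neg ∧
    ∀ (n : ℕ) (c : ℕ → H), c n ≠ zero →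
      ∃ S : Finset H, (S.sum fun a => hmult add mul zero one neg n c a) = n

/-- Iterated splitting off of a list of linear factors: `c ∈ (X ⊞ -a₁) ⊙ ⋯ ⊙ (X ⊞ -aₘ) ⊙ d`. -/
def MultiLinFactor {H : Type*} (add : H → H → Set H) (mul : H → H → H) (zero : H)
    (neg : H → H) : List H → (ℕ → H) → (ℕ → H) → Prop
  | [], c, d => c = d
  | a :: l, c, d => ∃ e : ℕ → H, LinFactor add mul zero neg a c e ∧
      MultiLinFactor add mul zero neg l e d

/-- The inheritance property: any sub-multiset of the multiset of roots (with
multiplicity) of size at most the degree can be split off as linear factors. -/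
def Inheritance {H : Type*} (add : H → H → Set H) (mul : H → H → H)
    (zero one : H) (neg : H → H) : Prop :=
  ∀ (n : ℕ) (c : ℕ → H), c n ≠ zero →
    ∀ l : List H, l.length ≤ n →
      (∀ a : H, (l.filter fun x => x = a).length ≤ hmult add mul zero one neg n c a) →
      ∃ q : ℕ → H, MultiLinFactor add mul zero neg l c q

/-!
On the circle of radius `r`, `z ⊞ w` is the radial projection onto that circle of the segment
`[z, w]`, or the whole disc of radius `r` when the segment passes through `0`. Hence for `x, y, z`
of common norm `r`, `x ⊞ (y ⊞ z)` is the disc if `0` lies in the convex hull of `{x, y, z}` and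
the radial projection of that hull otherwise, a description symmetric in `x, y, z`. Summands of
strictly smaller norm are absorbed, which reduces associativity to this case.
-/

open scoped Convex

section RadialProjection

variable {E : Type*} [NormedAddCommGroup E] [NormedSpace ℝ E]

noncomputable def radialProj (r : ℝ) (u : E) : E := (r / ‖u‖) • u

theorem radialProj_zero_right (r : ℝ) : radialProj r (0 : E) = 0 := by
  simp [radialProj]

theorem radialProj_of_norm_eq {r : ℝ} {u : E} (h : ‖u‖ = r) : radialProj r u = u := by
  rcases eq_or_ne u 0 with rfl | hu
  · exact radialProj_zero_right r
  · rw [radialProj, ← h, div_self (norm_ne_zero_iff.mpr hu), one_smul]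

theorem norm_radialProj {r : ℝ} (hr : 0 ≤ r) {u : E} (hu : u ≠ 0) : ‖radialProj r u‖ = r := by
  rw [radialProj, norm_smul, Real.norm_of_nonneg (by positivity),
    div_mul_cancel₀ _ (norm_ne_zero_iff.mpr hu)]

theorem norm_radialProj_le {r : ℝ} (hr : 0 ≤ r) (u : E) : ‖radialProj r u‖ ≤ r := by
  rcases eq_or_ne u 0 with rfl | hu
  · simpa [radialProj_zero_right] using hr
  · exact (norm_radialProj hr hu).le

theorem radialProj_smul_of_pos (r : ℝ) {d : ℝ} (hd : 0 < d) (u : E) :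
    radialProj r (d • u) = radialProj r u := by
  rcases eq_or_ne u 0 with rfl | hu
  · rw [smul_zero]
  · rw [radialProj, radialProj, norm_smul, Real.norm_of_nonneg hd.le, smul_smul]
    congr 1
    field_simp

theorem radialProj_smul_add_smul_mem {r a b : ℝ} (ha : 0 ≤ a) (hb : 0 ≤ b) (hab : 0 < a + b)
    (u v : E) : radialProj r (a • u + b • v) ∈ radialProj r '' [u -[ℝ] v] := by
  refine ⟨(a / (a + b)) • u + (b / (a + b)) • v,
    ⟨_, _, by positivity, by positivity, by field_simp, rfl⟩, ?_⟩
  rw [← radialProj_smul_of_pos r hab, smul_add, smul_smul, smul_smul,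
    mul_div_cancel₀ _ hab.ne', mul_div_cancel₀ _ hab.ne']

theorem image_radialProj_segment_smul_right (r : ℝ) (u v : E) {d : ℝ} (hd : 0 < d) :
    radialProj r '' [u -[ℝ] d • v] = radialProj r '' [u -[ℝ] v] := by
  have hsub : ∀ {d : ℝ} (v : E), 0 < d →
      radialProj r '' [u -[ℝ] d • v] ⊆ radialProj r '' [u -[ℝ] v] := by
    rintro d v hd _ ⟨_, ⟨a, b, ha, hb, hab, rfl⟩, rfl⟩
    have hpos : 0 < a + b * d := by
      rcases ha.eq_or_lt with rfl | ha
      · rw [zero_add] at hab ⊢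
        rwa [hab, one_mul]
      · positivity
    rw [smul_smul]
    exact radialProj_smul_add_smul_mem ha (by positivity) hpos u v
  refine (hsub v hd).antisymm ?_
  simpa [smul_smul, inv_mul_cancel₀ hd.ne'] using hsub (d • v) (inv_pos.mpr hd)

theorem zero_mem_segment_iff_sameRay {u v : E} : (0 : E) ∈ [u -[ℝ] v] ↔ SameRay ℝ (-u) v := by
  rw [mem_segment_iff_sameRay, zero_sub, sub_zero]

theorem zero_mem_segment_iff_eq_neg {u v : E} (h : ‖v‖ = ‖u‖) :
    (0 : E) ∈ [u -[ℝ] v] ↔ v = -u := by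
  rw [zero_mem_segment_iff_sameRay]
  refine ⟨fun hs => (hs.eq_of_norm_eq (by rw [norm_neg, h])).symm, ?_⟩
  rintro rfl
  exact SameRay.rfl

theorem zero_mem_segment_smul_right_iff {u v : E} {d : ℝ} (hd : 0 < d) :
    (0 : E) ∈ [u -[ℝ] d • v] ↔ (0 : E) ∈ [u -[ℝ] v] := by
  simp only [zero_mem_segment_iff_sameRay]
  refine ⟨fun h => ?_, fun h => h.pos_smul_right hd⟩
  simpa [smul_smul, inv_mul_cancel₀ hd.ne'] using h.pos_smul_right (inv_pos.mpr hd)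

end RadialProjection

theorem radialProj_mul (a : ℂ) (r : ℝ) (s : ℂ) :
    radialProj (‖a‖ * r) (a * s) = a * radialProj r s := by
  rcases eq_or_ne a 0 with rfl | ha
  · simp [radialProj]
  · rw [radialProj, radialProj, norm_mul, mul_div_mul_left _ _ (norm_ne_zero_iff.mpr ha),
      mul_smul_comm]

theorem image_mul_left_segment (a x y : ℂ) : (a * ·) '' [x -[ℝ] y] = [a * x -[ℝ] a * y] :=
  image_segment ℝ (LinearMap.mulLeft ℝ a).toAffineMap x y

theorem image_mul_left_setOf_norm_le {a : ℂ} (ha : a ≠ 0) (r : ℝ) :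
    (a * ·) '' {c : ℂ | ‖c‖ ≤ r} = {c | ‖c‖ ≤ ‖a‖ * r} := by
  ext c
  constructor
  · rintro ⟨b, hb, rfl⟩
    rw [mem_ofPred_eq, norm_mul]
    exact mul_le_mul_of_nonneg_left hb (norm_nonneg a)
  · intro hc
    refine ⟨a⁻¹ * c, ?_, mul_inv_cancel_left₀ ha c⟩
    rw [mem_ofPred_eq, norm_mul, norm_inv, inv_mul_le_iff₀ (norm_pos_iff.mpr ha)]
    exact hc

theorem TCadd_self_neg (z : ℂ) : TCadd z (-z) = {c | ‖c‖ ≤ ‖z‖} :=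
  if_pos rfl

theorem TCadd_eq_singleton_left {z w : ℂ} (h : ‖w‖ < ‖z‖) : TCadd z w = {z} := by
  have hw : w ≠ -z := by
    rintro rfl
    exact (norm_neg z ▸ h).false
  rw [TCadd, if_neg hw, if_pos h]

theorem TCadd_eq_singleton_right {z w : ℂ} (h : ‖z‖ < ‖w‖) : TCadd z w = {w} := by
  have hw : w ≠ -z := by
    rintro rfl
    exact (norm_neg z ▸ h).false
  rw [TCadd, if_neg hw, if_neg h.not_gt, if_pos h]

theorem TCadd_of_norm_eq {z w : ℂ} (h : ‖w‖ = ‖z‖) :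
    TCadd z w = if (0 : ℂ) ∈ [z -[ℝ] w] then {c | ‖c‖ ≤ ‖z‖}
      else radialProj ‖z‖ '' [z -[ℝ] w] := by
  rw [zero_mem_segment_iff_eq_neg h, TCadd, h, if_neg (lt_irrefl _), if_neg (lt_irrefl _)]
  congr 1
  rw [segment_symm, segment_eq_image, image_image]
  ext c
  simp only [mem_ofPred_eq, mem_image, mem_Icc, radialProj, Complex.real_smul]
  constructor
  · rintro ⟨t, ht0, ht1, rfl⟩
    exact ⟨t, ⟨ht0, ht1⟩, by push_cast; ring_nf⟩
  · rintro ⟨t, ⟨ht0, ht1⟩, rfl⟩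
    exact ⟨t, ht0, ht1, by push_cast; ring_nf⟩

theorem image_radialProj_segment_subset_TCadd {z w : ℂ} (h : ‖w‖ = ‖z‖) :
    radialProj ‖z‖ '' [z -[ℝ] w] ⊆ TCadd z w := by
  rw [TCadd_of_norm_eq h]
  split_ifs
  · rintro _ ⟨s, -, rfl⟩
    exact norm_radialProj_le (norm_nonneg z) s
  · exact subset_rfl

theorem left_mem_TCadd {z w : ℂ} (h : ‖w‖ ≤ ‖z‖) : z ∈ TCadd z w := by
  rcases h.lt_or_eq with h | h
  · rw [TCadd_eq_singleton_left h]
    rfl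
  · exact image_radialProj_segment_subset_TCadd h
      ⟨z, left_mem_segment ℝ z w, radialProj_of_norm_eq rfl⟩

theorem TCadd_comm (z w : ℂ) : TCadd z w = TCadd w z := by
  rcases lt_trichotomy ‖w‖ ‖z‖ with h | h | h
  · rw [TCadd_eq_singleton_left h, TCadd_eq_singleton_right h]
  · rw [TCadd_of_norm_eq h, TCadd_of_norm_eq h.symm, h, segment_symm]
  · rw [TCadd_eq_singleton_right h, TCadd_eq_singleton_left h]

theorem right_mem_TCadd {z w : ℂ} (h : ‖z‖ ≤ ‖w‖) : w ∈ TCadd z w :=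
  TCadd_comm w z ▸ left_mem_TCadd h

theorem TCadd_nonempty (z w : ℂ) : (TCadd z w).Nonempty :=
  (le_total ‖w‖ ‖z‖).elim (fun h => ⟨z, left_mem_TCadd h⟩) fun h => ⟨w, right_mem_TCadd h⟩

theorem TCadd_zero_left (x : ℂ) : TCadd 0 x = {x} := by
  rcases eq_or_ne x 0 with rfl | hx
  · have h := TCadd_self_neg (0 : ℂ)
    rw [neg_zero] at h
    rw [h]
    ext c
    simp
  · exact TCadd_eq_singleton_right (by simpa using hx)

theorem norm_eq_max_of_mem_TCadd {z w c : ℂ} (hw : w ≠ -z) (hc : c ∈ TCadd z w) :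
    ‖c‖ = max ‖z‖ ‖w‖ := by
  rcases lt_trichotomy ‖w‖ ‖z‖ with h | h | h
  · rw [TCadd_eq_singleton_left h] at hc
    rw [hc, max_eq_left h.le]
  · rw [TCadd_of_norm_eq h, if_neg ((zero_mem_segment_iff_eq_neg h).not.mpr hw)] at hc
    obtain ⟨s, hs, rfl⟩ := hc
    have hs0 : s ≠ 0 := by
      rintro rfl
      exact hw ((zero_mem_segment_iff_eq_neg h).mp hs)
    rw [norm_radialProj (norm_nonneg z) hs0, h, max_self]
  · rw [TCadd_eq_singleton_right h] at hc
    rw [hc, max_eq_right h.le]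

theorem norm_le_max_of_mem_TCadd {z w c : ℂ} (hc : c ∈ TCadd z w) : ‖c‖ ≤ max ‖z‖ ‖w‖ := by
  by_cases hw : w = -z
  · subst hw
    rw [TCadd_self_neg] at hc
    exact hc.trans (le_max_left _ _)
  · exact (norm_eq_max_of_mem_TCadd hw hc).le

theorem eq_neg_of_zero_mem_TCadd {x y : ℂ} (h : 0 ∈ TCadd x y) : y = -x := by
  by_contra hy
  have hmax := norm_eq_max_of_mem_TCadd hy h
  rw [norm_zero] at hmax
  have hx : x = 0 := norm_le_zero_iff.mp (hmax ▸ le_max_left _ _)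
  have hy0 : y = 0 := norm_le_zero_iff.mp (hmax ▸ le_max_right _ _)
  exact hy (by rw [hx, hy0, neg_zero])

theorem mem_TCadd_radialProj_neg {y z s : ℂ} (hzy : ‖z‖ = ‖y‖) (hz : z ≠ -y)
    (hs : s ∈ [y -[ℝ] z]) : z ∈ TCadd (radialProj ‖y‖ s) (-y) := by
  have hs0 : s ≠ 0 := by
    rintro rfl
    exact hz ((zero_mem_segment_iff_eq_neg hzy).mp hs)
  have hr : 0 < ‖y‖ := norm_pos_iff.mpr fun hy => hz <| by
    rw [hy, neg_zero, ← norm_eq_zero, hzy, hy, norm_zero]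
  set r := ‖y‖
  have hx : ‖radialProj r s‖ = r := norm_radialProj hr.le hs0
  obtain ⟨a, b, ha, hb, hab, hs⟩ := hs
  rcases hb.eq_or_lt with rfl | hb
  · rw [zero_smul, add_zero, (by linarith : a = 1), one_smul] at hs
    rw [← hs, radialProj_of_norm_eq rfl, TCadd_self_neg]
    exact hzy.le
  · refine image_radialProj_segment_subset_TCadd (by rw [norm_neg, hx]) ?_
    have hrescale : (‖s‖ / r) • radialProj r s = s := by
      rw [radialProj, smul_smul, div_mul_div_comm, mul_comm ‖s‖ r,
        div_self (mul_ne_zero hr.ne' (norm_ne_zero_iff.mpr hs0)), one_smul]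
    have hzcomb : z = b⁻¹ • ((‖s‖ / r) • radialProj r s + a • -y) := by
      rw [hrescale, ← hs, smul_neg, add_neg_cancel_comm, inv_smul_smul₀ hb.ne']
    rw [hx, ← radialProj_of_norm_eq hzy, hzcomb, radialProj_smul_of_pos r (inv_pos.mpr hb)]
    exact radialProj_smul_add_smul_mem (by positivity) ha
      (add_pos_of_pos_of_nonneg (by positivity) ha) _ _

theorem TCadd_reversible {x y z : ℂ} (h : x ∈ TCadd y z) : z ∈ TCadd x (-y) := by
  rcases lt_trichotomy ‖z‖ ‖y‖ with hzy | hzy | hzy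
  · rw [TCadd_eq_singleton_left hzy, mem_singleton_iff] at h
    rw [h, TCadd_self_neg]
    exact hzy.le
  · by_cases hz : z = -y
    · rw [hz, TCadd_self_neg] at h
      rw [hz]
      exact right_mem_TCadd (by rwa [norm_neg])
    · rw [TCadd_of_norm_eq hzy, if_neg ((zero_mem_segment_iff_eq_neg hzy).not.mpr hz)] at h
      obtain ⟨s, hs, rfl⟩ := h
      exact mem_TCadd_radialProj_neg hzy hz hs
  · rw [TCadd_eq_singleton_right hzy, mem_singleton_iff] at h
    rw [h]
    exact left_mem_TCadd (by rw [norm_neg]; exact hzy.le)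

theorem image_mul_left_TCadd (a x y : ℂ) : (a * ·) '' TCadd x y = TCadd (a * x) (a * y) := by
  rcases eq_or_ne a 0 with rfl | ha
  · simp only [zero_mul, TCadd_zero_left]
    exact (TCadd_nonempty x y).image_const 0
  have hmono : ∀ {u v : ℂ}, ‖u‖ < ‖v‖ → ‖a * u‖ < ‖a * v‖ := fun h => by
    simp only [norm_mul]
    exact mul_lt_mul_of_pos_left h (norm_pos_iff.mpr ha)
  rcases lt_trichotomy ‖y‖ ‖x‖ with h | h | h
  · rw [TCadd_eq_singleton_left h, TCadd_eq_singleton_left (hmono h), image_singleton]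
  · have h' : ‖a * y‖ = ‖a * x‖ := by simp only [norm_mul, h]
    rw [TCadd_of_norm_eq h, TCadd_of_norm_eq h', zero_mem_segment_iff_eq_neg h,
      zero_mem_segment_iff_eq_neg h', ← mul_neg, mul_right_inj' ha]
    split_ifs
    · rw [image_mul_left_setOf_norm_le ha, norm_mul]
    · rw [image_image, ← image_mul_left_segment, image_image, norm_mul]
      simp_rw [radialProj_mul]
  · rw [TCadd_eq_singleton_right h, TCadd_eq_singleton_right (hmono h), image_singleton]

theorem biUnion_TCadd_setOf_norm_le {x : ℂ} {r : ℝ} (hx : ‖x‖ ≤ r) :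
    ⋃ w ∈ {w : ℂ | ‖w‖ ≤ r}, TCadd x w = {c | ‖c‖ ≤ r} := by
  refine subset_antisymm (iUnion₂_subset fun w hw c hc =>
    (norm_le_max_of_mem_TCadd hc).trans (max_le hx hw)) fun c hc => ?_
  rcases le_or_gt ‖c‖ ‖x‖ with h | h
  · exact mem_biUnion (x := -x) (by rwa [mem_ofPred_eq, norm_neg])
      (by rw [TCadd_self_neg]; exact h)
  · exact mem_biUnion hc (right_mem_TCadd h.le)

theorem biUnion_TCadd_of_norm_lt {x y z : ℂ} (hy : ‖y‖ < max ‖z‖ ‖x‖) :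
    ⋃ w ∈ TCadd z x, TCadd y w = TCadd z x := by
  by_cases hx : x = -z
  · rw [hx, norm_neg, max_self] at hy
    rw [hx, TCadd_self_neg, biUnion_TCadd_setOf_norm_le hy.le]
  · conv_rhs => rw [← biUnion_of_singleton (TCadd z x)]
    refine iUnion₂_congr fun w hw => TCadd_eq_singleton_right ?_
    rwa [norm_eq_max_of_mem_TCadd hx hw]

noncomputable def TCadd3 (x y z : ℂ) : Set ℂ := ⋃ w ∈ TCadd y z, TCadd x w

theorem TCadd3_swap (x y z : ℂ) : TCadd3 x y z = TCadd3 x z y := by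
  rw [TCadd3, TCadd3, TCadd_comm]

theorem TCadd_radialProj {x s : ℂ} {r : ℝ} (hx : ‖x‖ = r) (hr : 0 < r) (hs : s ≠ 0) :
    TCadd x (radialProj r s) = if (0 : ℂ) ∈ [x -[ℝ] s] then {c | ‖c‖ ≤ r}
      else radialProj r '' [x -[ℝ] s] := by
  have hd : 0 < r / ‖s‖ := div_pos hr (norm_pos_iff.mpr hs)
  rw [TCadd_of_norm_eq (by rw [norm_radialProj hr.le hs, hx]), hx,
    show radialProj r s = (r / ‖s‖) • s from rfl, zero_mem_segment_smul_right_iff hd,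
    image_radialProj_segment_smul_right r x s hd]

theorem TCadd3_of_norm_eq {x y z : ℂ} {r : ℝ} (hx : ‖x‖ = r) (hy : ‖y‖ = r) (hz : ‖z‖ = r) :
    TCadd3 x y z = if (0 : ℂ) ∈ convexHull ℝ {x, y, z} then {c | ‖c‖ ≤ r}
      else radialProj r '' convexHull ℝ {x, y, z} := by
  have hhull : convexHull ℝ {x, y, z} = ⋃ s ∈ [y -[ℝ] z], [x -[ℝ] s] := by
    rw [convexHull_insert (insert_nonempty y {z}), convexHull_pair, convexJoin_singleton_left]
  rw [TCadd3, TCadd_of_norm_eq (hz.trans hy.symm), hy]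
  by_cases hyz : (0 : ℂ) ∈ [y -[ℝ] z]
  · rw [if_pos hyz, if_pos (segment_subset_convexHull (by simp) (by simp) hyz),
      biUnion_TCadd_setOf_norm_le hx.le]
  have hsz : ∀ s ∈ [y -[ℝ] z], s ≠ 0 := fun s hs h => hyz (h ▸ hs)
  have hr : 0 < r := hy ▸ norm_pos_iff.mpr (hsz y (left_mem_segment ℝ y z))
  rw [if_neg hyz, biUnion_image,
    iUnion₂_congr fun s hs => TCadd_radialProj hx hr (hsz s hs), hhull]
  simp only [mem_iUnion₂, exists_prop]
  split_ifs with h0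
  · obtain ⟨s, hs, h0s⟩ := h0
    refine subset_antisymm (iUnion₂_subset fun s' _ => ?_) ?_
    · split_ifs
      · exact subset_rfl
      · rintro _ ⟨p, -, rfl⟩
        exact norm_radialProj_le hr.le p
    · exact fun c hc => mem_biUnion hs (by rwa [if_pos h0s])
  · rw [image_iUnion₂]
    exact iUnion₂_congr fun s hs => if_neg fun h => h0 ⟨s, hs, h⟩

theorem TCadd3_rotate_of_norm_le {x y z : ℂ} (hy : ‖y‖ ≤ ‖x‖) (hz : ‖z‖ ≤ ‖x‖) :
    TCadd3 x y z = TCadd3 y z x := by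
  rcases hy.lt_or_eq with hy | hy <;> rcases hz.lt_or_eq with hz | hz
  · have hlhs : TCadd3 x y z = {x} := by
      refine subset_antisymm (iUnion₂_subset fun w hw => (TCadd_eq_singleton_left
        ((norm_le_max_of_mem_TCadd hw).trans_lt (max_lt hy hz))).subset) ?_
      obtain ⟨w, hw⟩ := TCadd_nonempty y z
      exact singleton_subset_iff.mpr (mem_biUnion hw (left_mem_TCadd
        ((norm_le_max_of_mem_TCadd hw).trans (max_le hy.le hz.le))))
    rw [hlhs, TCadd3, biUnion_TCadd_of_norm_lt (lt_max_of_lt_right hy),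
      TCadd_eq_singleton_right hz]
  · rw [TCadd3, TCadd_eq_singleton_right (hz ▸ hy), biUnion_singleton, TCadd3,
      biUnion_TCadd_of_norm_lt (lt_max_of_lt_right hy), TCadd_comm]
  · rw [TCadd3, TCadd_eq_singleton_left (hy ▸ hz), biUnion_singleton, TCadd3,
      TCadd_eq_singleton_right hz, biUnion_singleton, TCadd_comm]
  · have hrot : ({y, z, x} : Set ℂ) = {x, y, z} := by
      rw [insert_comm, pair_comm, insert_comm, pair_comm]
    rw [TCadd3_of_norm_eq rfl hy hz, TCadd3_of_norm_eq hy hz rfl, hrot]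

theorem TCadd3_rotate (x y z : ℂ) : TCadd3 x y z = TCadd3 y z x := by
  have of_max_right : ‖x‖ ≤ ‖z‖ → ‖y‖ ≤ ‖z‖ → TCadd3 x y z = TCadd3 y z x := fun hx hy =>
    calc TCadd3 x y z = TCadd3 z x y := (TCadd3_rotate_of_norm_le hx hy).symm
      _ = TCadd3 z y x := TCadd3_swap z x y
      _ = TCadd3 y x z := TCadd3_rotate_of_norm_le hy hx
      _ = TCadd3 y z x := TCadd3_swap y x z
  rcases le_total ‖y‖ ‖x‖ with hyx | hxy
  · rcases le_total ‖z‖ ‖x‖ with hzx | hxz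
    · exact TCadd3_rotate_of_norm_le hyx hzx
    · exact of_max_right hxz (hyx.trans hxz)
  · rcases le_total ‖z‖ ‖y‖ with hzy | hyz
    · rw [TCadd3_swap x y z, ← TCadd3_rotate_of_norm_le hxy hzy, TCadd3_swap]
    · exact of_max_right (hxy.trans hyz) hyz

theorem TCadd_assoc (x y z : ℂ) :
    ⋃ w ∈ TCadd x y, TCadd w z = ⋃ w ∈ TCadd y z, TCadd x w :=
  calc ⋃ w ∈ TCadd x y, TCadd w z = TCadd3 z x y := iUnion₂_congr fun w _ => TCadd_comm w z
    _ = TCadd3 x y z := TCadd3_rotate z x y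

/-- The tropical complex hyperfield `TC` is a hyperfield. -/
theorem tropicalComplex_isHyperfield :
    IsHyperfield TCadd (· * ·) (Neg.neg : ℂ → ℂ) (0 : ℂ) (1 : ℂ) := by
  refine
    { add_nonempty := TCadd_nonempty
      hadd_comm := TCadd_comm
      hadd_assoc := TCadd_assoc
      zero_hadd := TCadd_zero_left
      hneg_add := fun x => ?_
      hneg_unique := fun _ _ => eq_neg_of_zero_mem_TCadd
      reversible := fun _ _ _ => TCadd_reversible
      hmul_comm := mul_comm
      hmul_assoc := mul_assoc
      one_hmul := one_mul
      zero_hmul := zero_mul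
      hdistrib := image_mul_left_TCadd
      zero_ne_one := zero_ne_one
      exists_inv := fun x hx => ⟨x⁻¹, mul_inv_cancel₀ hx⟩ }
  rw [TCadd_self_neg, mem_ofPred_eq, norm_zero]
  exact norm_nonneg x
end

section
/- A hyperfield H is algebraically closed (every non-constant univariate polynomial over H has a root) if and only if the canonical hyperfield homomorphism f: H → K to the Krasner hyperfield, sending 0 to 0 and all nonzero elements to 1, is relatively algebraically closed. -/
open Set
open scoped Classical

/-! Over `K` the push-forward of `p = ⊞ cᵢ ⊙ Xⁱ` has the root `0` iff `c₀ = 0`, and the root `1`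
iff `p` does not have exactly one nonzero coefficient. The root `0` always lifts to the root `0`
of `p`. Lifting `1` means finding a nonzero root of every `p` with at least two nonzero
coefficients: factoring out the lowest power `Xᵐ` and discarding the vanishing top coefficients
leaves a polynomial of positive degree with nonzero constant term, whose roots are all nonzero.
Conversely a polynomial of positive degree with nonzero leading coefficient either has `c₀ = 0`
or two nonzero coefficients, so its push-forward has a root, and RAC lifts it. -/

section HSum

variable {H : Type*} {add : H → H → Set H} {zero : H}

theorem hsum_eq_singleton_of_forall_eq_zero (zero_hadd : ∀ x, add zero x = {x}) {l : List H}
    (hl : ∀ x ∈ l, x = zero) : hsum add zero l = {zero} := by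
  induction l with
  | nil => rfl
  | cons a l ih =>
    obtain rfl : a = zero := hl a (List.mem_cons_self ..)
    simp [hsum, ih fun x hx => hl x (List.mem_cons_of_mem _ hx), zero_hadd]

theorem hsum_append_of_forall_eq_zero_left (zero_hadd : ∀ x, add zero x = {x})
    {l₁ : List H} (l₂ : List H) (hl : ∀ x ∈ l₁, x = zero) :
    hsum add zero (l₁ ++ l₂) = hsum add zero l₂ := by
  induction l₁ with
  | nil => rfl
  | cons a l ih =>
    obtain rfl : a = zero := hl a (List.mem_cons_self ..)
    simp [hsum, ih fun x hx => hl x (List.mem_cons_of_mem _ hx), zero_hadd]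

theorem hsum_append_of_forall_eq_zero_right (zero_hadd : ∀ x, add zero x = {x})
    (l₁ : List H) {l₂ : List H} (hl : ∀ x ∈ l₂, x = zero) :
    hsum add zero (l₁ ++ l₂) = hsum add zero l₁ := by
  induction l₁ with
  | nil => exact hsum_eq_singleton_of_forall_eq_zero zero_hadd hl
  | cons a l ih => simp only [List.cons_append, hsum, ih]

end HSum

namespace IsHyperfield

variable {H : Type*} {add : H → H → Set H} {mul : H → H → H} {neg : H → H} {zero one : H}

theorem hmul_zero (h : IsHyperfield add mul neg zero one) (x : H) : mul x zero = zero := by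
  rw [h.hmul_comm, h.zero_hmul]

theorem hmul_one (h : IsHyperfield add mul neg zero one) (x : H) : mul x one = x := by
  rw [h.hmul_comm, h.one_hmul]

theorem hpow_add (h : IsHyperfield add mul neg zero one) (a : H) (p q : ℕ) :
    hpow mul one a (p + q) = mul (hpow mul one a p) (hpow mul one a q) := by
  induction p with
  | zero => simp [hpow, h.one_hmul]
  | succ p ih => rw [Nat.add_right_comm, hpow, hpow, ih, h.hmul_assoc]

theorem image_hmul_hsum (h : IsHyperfield add mul neg zero one) (k : H) (l : List H) :
    mul k '' hsum add zero l = hsum add zero (l.map (mul k)) := by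
  induction l with
  | nil => simp [hsum, h.hmul_zero]
  | cons a l ih =>
    simp only [hsum, List.map_cons, image_iUnion₂, ← ih, biUnion_image, h.hdistrib]

theorem evalPoly_eq_singleton_zero (h : IsHyperfield add mul neg zero one) {n : ℕ}
    {c : ℕ → H} (hc : ∀ i ≤ n, c i = zero) (a : H) :
    evalPoly add mul zero one n c a = {zero} := by
  refine hsum_eq_singleton_of_forall_eq_zero h.zero_hadd ?_
  simp only [List.mem_map, List.mem_range, forall_exists_index, and_imp]
  rintro _ i hi rfl
  rw [hc i (by omega), h.zero_hmul]

theorem evalPoly_at_zero (h : IsHyperfield add mul neg zero one) (n : ℕ) (c : ℕ → H) :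
    evalPoly add mul zero one n c zero = {c 0} := by
  have hpow_zero (i : ℕ) : hpow mul one zero (i + 1) = zero := h.zero_hmul _
  rw [evalPoly, List.range_succ_eq_map, List.map_cons, List.map_map, ← List.singleton_append,
    hsum_append_of_forall_eq_zero_right h.zero_hadd]
  · simp [hsum, hpow, h.hmul_one, h.hadd_comm _ zero, h.zero_hadd]
  · simp [hpow_zero, h.hmul_zero]

theorem evalPoly_add_of_forall_eq_zero (h : IsHyperfield add mul neg zero one) {j : ℕ}
    (k : ℕ) {c : ℕ → H} (hc : ∀ i, j < i → i ≤ j + k → c i = zero) (a : H) :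
    evalPoly add mul zero one (j + k) c a = evalPoly add mul zero one j c a := by
  rw [evalPoly, Nat.add_right_comm, List.range_add, List.map_append,
    hsum_append_of_forall_eq_zero_right h.zero_hadd, evalPoly]
  simp only [List.map_map, List.mem_map, List.mem_range, Function.comp_apply,
    forall_exists_index, and_imp]
  rintro _ i hi rfl
  rw [hc _ (by omega) (by omega), h.zero_hmul]

theorem evalPoly_add_eq_image_of_forall_eq_zero (h : IsHyperfield add mul neg zero one)
    {m : ℕ} (k : ℕ) {c : ℕ → H} (hc : ∀ i < m, c i = zero) (a : H) :
    evalPoly add mul zero one (m + k) c a =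
      mul (hpow mul one a m) '' evalPoly add mul zero one k (fun i => c (m + i)) a := by
  rw [evalPoly, Nat.add_assoc, List.range_add, List.map_append,
    hsum_append_of_forall_eq_zero_left h.zero_hadd, evalPoly, h.image_hmul_hsum]
  · congr 1
    simp only [List.map_map]
    refine List.map_congr_left fun i _ => ?_
    simp only [Function.comp_apply]
    rw [h.hpow_add, ← h.hmul_assoc, h.hmul_comm (c (m + i)), h.hmul_assoc]
  · simp only [List.mem_map, List.mem_range, forall_exists_index, and_imp]
    rintro _ i hi rfl
    rw [hc i hi, h.zero_hmul]

end IsHyperfield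

theorem mem_hsum_Kadd_iff (l : List Bool) :
    (false ∈ hsum Kadd false l ↔ l.count true ≠ 1) ∧
      (true ∈ hsum Kadd false l ↔ l.count true ≠ 0) := by
  induction l with
  | nil => simp [hsum]
  | cons a l ih =>
    cases a
    · simpa [hsum, Kadd] using ih
    simp only [hsum, Kadd, mem_iUnion, List.count_cons_self]
    refine ⟨⟨?_, fun hc => ⟨true, ih.2.2 (by omega), by simp⟩⟩, ?_⟩
    · rintro ⟨b, hb, hf⟩
      cases b
      · simp at hf
      · have := ih.2.1 hb
        omega
    · refine iff_of_true ?_ (by omega)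
      by_cases hl : l.count true = 1
      · exact ⟨true, ih.2.2 (by omega), by simp⟩
      · exact ⟨false, ih.1.2 hl, by simp⟩

theorem hpow_and_true (i : ℕ) : hpow and true true i = true := by
  induction i with
  | zero => rfl
  | succ i ih => simp [hpow, ih]

theorem evalPoly_Kadd_true (n : ℕ) (g : ℕ → Bool) :
    evalPoly Kadd and false true n g true = hsum Kadd false ((List.range (n + 1)).map g) := by
  simp [evalPoly, hpow_and_true]

theorem evalPoly_Kadd_false (n : ℕ) (g : ℕ → Bool) :
    evalPoly Kadd and false true n g false = {g 0} := by
  rw [evalPoly, List.range_succ_eq_map, List.map_cons, ← List.singleton_append,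
    hsum_append_of_forall_eq_zero_right (fun x => by simp [Kadd])]
  · cases g 0 <;> simp [hsum, hpow, Kadd]
  · simp [hpow]

section Krasner

variable {H : Type*} (zero : H)

noncomputable def toKrasner (x : H) : Bool := if x = zero then false else true

noncomputable def coeffSupport (n : ℕ) (c : ℕ → H) : Finset ℕ :=
  (Finset.range (n + 1)).filter fun i => c i ≠ zero

variable {zero}

theorem toKrasner_eq_true_iff {x : H} : toKrasner zero x = true ↔ x ≠ zero := by
  simp [toKrasner]

theorem count_map_toKrasner (n : ℕ) (c : ℕ → H) :
    ((List.range (n + 1)).map fun i => toKrasner zero (c i)).count true =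
      (coeffSupport zero n c).card := by
  rw [coeffSupport, Finset.card_def, Finset.filter_val, Finset.range_val, Multiset.range,
    Multiset.filter_coe, Multiset.coe_card, List.count, List.countP_map,
    List.countP_eq_length_filter]
  congr 2
  ext i
  simp [toKrasner]

theorem false_mem_evalPoly_toKrasner_false_iff (n : ℕ) (c : ℕ → H) :
    false ∈ evalPoly Kadd and false true n (fun i => toKrasner zero (c i)) false ↔ c 0 = zero := by
  simp [evalPoly_Kadd_false, toKrasner]

theorem false_mem_evalPoly_toKrasner_true_iff (n : ℕ) (c : ℕ → H) :
    false ∈ evalPoly Kadd and false true n (fun i => toKrasner zero (c i)) true ↔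
      (coeffSupport zero n c).card ≠ 1 := by
  rw [evalPoly_Kadd_true, (mem_hsum_Kadd_iff _).1, count_map_toKrasner]

end Krasner

def IsHAlgClosed {H : Type*} (add : H → H → Set H) (mul : H → H → H) (zero one : H) : Prop :=
  ∀ (n : ℕ) (c : ℕ → H), 1 ≤ n → c n ≠ zero → ∃ a : H, zero ∈ evalPoly add mul zero one n c a

theorem IsHAlgClosed.exists_ne_zero_root {H : Type*} {add : H → H → Set H} {mul : H → H → H}
    {neg : H → H} {zero one : H} (h : IsHyperfield add mul neg zero one)
    (hAC : IsHAlgClosed add mul zero one) {n : ℕ} {c : ℕ → H}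
    (hc : 1 < (coeffSupport zero n c).card) :
    ∃ a ≠ zero, zero ∈ evalPoly add mul zero one n c a := by
  set S := coeffSupport zero n c
  have hS : S.Nonempty := Finset.card_pos.1 (by omega)
  have mem_S {i : ℕ} : i ∈ S ↔ i ≤ n ∧ c i ≠ zero := by
    simp [S, coeffSupport]
  set m := S.min' hS
  set j := S.max' hS
  have hmj : m < j := S.min'_lt_max'_of_card hc
  have hcm : c m ≠ zero := (mem_S.1 (S.min'_mem hS)).2
  have hcj : c j ≠ zero := (mem_S.1 (S.max'_mem hS)).2
  have hjn : j ≤ n := (mem_S.1 (S.max'_mem hS)).1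
  have below (i : ℕ) (hi : i < m) : c i = zero :=
    by_contra fun hci => (S.min'_le i (mem_S.2 ⟨by omega, hci⟩)).not_gt hi
  have above (i : ℕ) (hji : j < i) (hin : i ≤ n) : c i = zero :=
    by_contra fun hci => (S.le_max' i (mem_S.2 ⟨hin, hci⟩)).not_gt hji
  obtain ⟨a, ha⟩ := hAC (j - m) (fun i => c (m + i)) (by omega)
    (by rwa [Nat.add_sub_cancel' hmj.le])
  refine ⟨a, fun ha0 => hcm ?_, ?_⟩
  · rw [ha0, h.evalPoly_at_zero] at ha
    exact ha.symm
  · rw [show n = m + (j - m) + (n - j) by omega,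
      h.evalPoly_add_of_forall_eq_zero _ (fun i _ _ => above i (by omega) (by omega)),
      h.evalPoly_add_eq_image_of_forall_eq_zero _ below]
    exact ⟨zero, ha, h.hmul_zero _⟩

/-- a hyperfield `H` is algebraically closed iff the canonical
homomorphism `H → K` to the Krasner hyperfield (sending `0 ↦ 0` and all
nonzero elements to `1`) is relatively algebraically closed. -/
theorem algClosed_iff_toKrasner_RAC {H : Type*}
    (add : H → H → Set H) (mul : H → H → H) (neg : H → H) (zero one : H)
    (h : IsHyperfield add mul neg zero one) :
    (∀ (n : ℕ) (c : ℕ → H), 1 ≤ n → c n ≠ zero →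
        ∃ a : H, zero ∈ evalPoly add mul zero one n c a) ↔
      IsRAC add mul zero one Kadd and false true
        (fun x : H => if x = zero then false else true) := by
  change IsHAlgClosed add mul zero one ↔
    IsRAC add mul zero one Kadd and false true (toKrasner zero)
  constructor
  · intro hAC n c b hroot
    cases b
    · rw [false_mem_evalPoly_toKrasner_false_iff] at hroot
      exact ⟨zero, if_pos rfl, by rw [h.evalPoly_at_zero, hroot]; rfl⟩
    · rw [false_mem_evalPoly_toKrasner_true_iff] at hroot
      obtain hS | hS : (coeffSupport zero n c).card = 0 ∨ 1 < (coeffSupport zero n c).card := by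
        omega
      · refine ⟨one, toKrasner_eq_true_iff.2 h.zero_ne_one.symm, ?_⟩
        rw [h.evalPoly_eq_singleton_zero (by simpa [coeffSupport, Nat.lt_succ_iff] using hS)]
        rfl
      · obtain ⟨a, ha, hroot⟩ := hAC.exists_ne_zero_root h hS
        exact ⟨a, toKrasner_eq_true_iff.2 ha, hroot⟩
  · intro hRAC n c hn hcn
    by_cases hc0 : c 0 = zero
    · obtain ⟨a, -, ha⟩ := hRAC n c false ((false_mem_evalPoly_toKrasner_false_iff n c).2 hc0)
      exact ⟨a, ha⟩
    · have hS : 1 < (coeffSupport zero n c).card := Finset.one_lt_card.2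
        ⟨0, by simp [coeffSupport, hc0], n, by simp [coeffSupport, hcn], by omega⟩
      obtain ⟨a, -, ha⟩ := hRAC n c true ((false_mem_evalPoly_toKrasner_true_iff n c).2 hS.ne')
      exact ⟨a, ha⟩
end
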